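/- Let σ, Δt > 0. The function δ ↦ 1/(1 + (δ/σ²)(√(1 + 2σ²/(δ²Δt)) − 1)) is strictly increasing on (0, ∞). -/

import Mathlib

lemma lvf_key (σ Δt δ : ℝ) (hσ : 0 < σ) (hΔt : 0 < Δt) (hδ : 0 < δ) :
    (δ / σ ^ 2) * (Real.sqrt (1 + 2 * σ ^ 2 / (δ ^ 2 * Δt)) - 1)
      = (Real.sqrt (δ ^ 2 + 2 * σ ^ 2 / Δt) - δ) / σ ^ 2 := by
  have h1 : δ * Real.sqrt (1 + 2 * σ ^ 2 / (δ ^ 2 * Δt))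
      = Real.sqrt (δ ^ 2 + 2 * σ ^ 2 / Δt) := by
    rw [← Real.sqrt_sq hδ.le, ← Real.sqrt_mul (by positivity), Real.sqrt_sq hδ.le]
    congr 1
    field_simp
  rw [div_mul_eq_mul_div, mul_sub, mul_one, h1]

theorem lvf_plus_strictMonoOn (σ Δt : ℝ) (hσ : 0 < σ) (hΔt : 0 < Δt) :
    StrictMonoOn
      (fun δ : ℝ => 1 / (1 + (δ / σ ^ 2) * (Real.sqrt (1 + 2 * σ ^ 2 / (δ ^ 2 * Δt)) - 1)))
      (Set.Ioi 0) := by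
  intro a ha b hb hab
  simp only [Set.mem_Ioi] at ha hb
  set c : ℝ := 2 * σ ^ 2 / Δt with hc
  have hcpos : 0 < c := by positivity
  have hsa : a < Real.sqrt (a ^ 2 + c) := by
    rw [Real.lt_sqrt ha.le]; linarith
  have hsb : b < Real.sqrt (b ^ 2 + c) := by
    rw [Real.lt_sqrt hb.le]; linarith
  have hsa2 : Real.sqrt (a ^ 2 + c) ^ 2 = a ^ 2 + c := Real.sq_sqrt (by positivity)
  have hsb2 : Real.sqrt (b ^ 2 + c) ^ 2 = b ^ 2 + c := Real.sq_sqrt (by positivity)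
  have hdec : Real.sqrt (b ^ 2 + c) - b < Real.sqrt (a ^ 2 + c) - a := by
    nlinarith [hsa, hsb, hab, hsa2, hsb2]
  simp only
  rw [lvf_key σ Δt a hσ hΔt ha, lvf_key σ Δt b hσ hΔt hb]
  have hσ2 : (0:ℝ) < σ ^ 2 := by positivity
  have hga : 0 < (Real.sqrt (a ^ 2 + c) - a) / σ ^ 2 := by
    apply div_pos (by linarith) hσ2
  have hgb : 0 < (Real.sqrt (b ^ 2 + c) - b) / σ ^ 2 := by
    apply div_pos (by linarith) hσ2
  rw [← hc]
  have hY : 0 < 1 + (Real.sqrt (b ^ 2 + c) - b) / σ ^ 2 := by linarith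
  have hlt : 1 + (Real.sqrt (b ^ 2 + c) - b) / σ ^ 2
      < 1 + (Real.sqrt (a ^ 2 + c) - a) / σ ^ 2 := by
    gcongr
  exact one_div_lt_one_div_of_lt hY hlt
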